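/- Let (α_n) be a decreasing positive sequence tending to 0 and A = {α_n e_n} ⊂ ℓ_p for p ∈ [1,∞] (ℓ_∞ meaning c₀). Then the dual thickness satisfies τ*(A) ≤ d_B(A). -/

import Mathlib

open Filter Metric Set Pointwise Topology ENNReal

/-- `coverNum X ε` : minimal number of balls of radius `ε` with centres in `X` covering `X`. -/
noncomputable def coverNum {E : Type*} [SeminormedAddCommGroup E] (X : Set E) (ε : ℝ) : ℕ∞ :=
  sInf {n : ℕ∞ | ∃ F : Finset E, ↑F ⊆ X ∧ (X ⊆ ⋃ c ∈ F, Metric.ball c ε) ∧ n = F.card}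

/-- extended logarithm of an extended natural number. -/
noncomputable def elog (n : ℕ∞) : EReal :=
  if n = ⊤ then ⊤ else ((Real.log n.toNat : ℝ) : EReal)

/-- The upper box-counting dimension `d_B(X) = limsup_{ε → 0⁺} log N(X,ε) / (-log ε)`. -/
noncomputable def dimBox {E : Type*} [SeminormedAddCommGroup E] (X : Set E) : EReal :=
  Filter.limsup (fun ε : ℝ => elog (coverNum X ε) / ((-Real.log ε : ℝ) : EReal)) (𝓝[>] 0)

/-- `thickNum X ε` : smallest dimension of a finite-dimensional subspace `V` with
`dist(x, V) ≤ ε` for all `x ∈ X` (`⊤` if none exists). -/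
noncomputable def thickNum {E : Type*} [NormedAddCommGroup E] [NormedSpace ℝ E]
    (X : Set E) (ε : ℝ) : ℕ∞ :=
  sInf {n : ℕ∞ | ∃ V : Submodule ℝ E, FiniteDimensional ℝ V ∧ n = Module.finrank ℝ V ∧
    ∀ x ∈ X, Metric.infDist x (V : Set E) ≤ ε}

/-- The thickness exponent `τ(X) = limsup_{ε → 0⁺} log d(X,ε) / (-log ε)`. -/
noncomputable def thickness {E : Type*} [NormedAddCommGroup E] [NormedSpace ℝ E]
    (X : Set E) : EReal :=
  Filter.limsup (fun ε : ℝ => elog (thickNum X ε) / ((-Real.log ε : ℝ) : EReal)) (𝓝[>] 0)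

/-- `dualThickNum X θ ε` : minimal dimension of a subspace `U ⊆ E*` such that for all
`x, y ∈ X` with `‖x - y‖ ≥ ε` some `φ ∈ U` has `|φ(x-y)| ≥ ε^(1+θ)`. -/
noncomputable def dualThickNum {E : Type*} [NormedAddCommGroup E] [NormedSpace ℝ E]
    (X : Set E) (θ ε : ℝ) : ℕ∞ :=
  sInf {n : ℕ∞ | ∃ U : Submodule ℝ (E →L[ℝ] ℝ), FiniteDimensional ℝ U ∧ n = Module.finrank ℝ U ∧
    ∀ x ∈ X, ∀ y ∈ X, ε ≤ ‖x - y‖ → ∃ φ ∈ U, ε ^ (1 + θ) ≤ |φ (x - y)|}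

noncomputable def dualThickTheta {E : Type*} [NormedAddCommGroup E] [NormedSpace ℝ E]
    (X : Set E) (θ : ℝ) : EReal :=
  Filter.limsup (fun ε : ℝ => elog (dualThickNum X θ ε) / ((-Real.log ε : ℝ) : EReal)) (𝓝[>] 0)

/-- The dual thickness `τ*(X) = lim_{θ → 0⁺} τ*_θ(X)` (the limit exists by monotonicity and
equals the limsup as `θ → 0⁺`). -/
noncomputable def dualThickness {E : Type*} [NormedAddCommGroup E] [NormedSpace ℝ E]
    (X : Set E) : EReal :=
  Filter.limsup (fun θ : ℝ => dualThickTheta X θ) (𝓝[>] 0)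

/-- `sigmaNum X α ε` : minimal dimension of a subspace `V ⊆ E*` such that whenever
`x, y ∈ X` with `‖x - y‖ ≥ ε` there is `Φ ∈ V` with `‖Φ‖ = 1` and `|Φ(x-y)| ≥ α ε`. -/
noncomputable def sigmaNum {E : Type*} [NormedAddCommGroup E] [NormedSpace ℝ E]
    (X : Set E) (α ε : ℝ) : ℕ∞ :=
  sInf {n : ℕ∞ | ∃ V : Submodule ℝ (E →L[ℝ] ℝ), FiniteDimensional ℝ V ∧ n = Module.finrank ℝ V ∧
    ∀ x ∈ X, ∀ y ∈ X, ε ≤ ‖x - y‖ → ∃ Φ ∈ V, ‖Φ‖ = 1 ∧ α * ε ≤ |Φ (x - y)|}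

noncomputable def sigmaExp {E : Type*} [NormedAddCommGroup E] [NormedSpace ℝ E]
    (X : Set E) (α : ℝ) : EReal :=
  Filter.limsup (fun ε : ℝ => elog (sigmaNum X α ε) / ((-Real.log ε : ℝ) : EReal)) (𝓝[>] 0)


/-!
Two points `α_n e_n ≠ α_m e_m` at distance `≥ ε` differ by `≥ ε/2` in one of their two nonzero
coordinates, since `‖α_n e_n - α_m e_m‖ ≤ |α_n| + |α_m|`. Only finitely many indices have
`|α_n| ≥ ε/2`, and their coordinate functionals witness `d_θ(A, ε)` once `ε^θ ≤ 1/2`. Each such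
point is `ε/2`-isolated in `A`, so it is the centre of any `ε/2`-cover. Hence
`d_θ(A, ε) ≤ N(A, ε/2)`, and halving the scale does not change a logarithmic growth exponent.
-/

theorem elog_mono : Monotone elog := by
  intro m n hmn
  rcases eq_or_ne n ⊤ with rfl | hn
  · simp [elog]
  have hm : m ≠ ⊤ := ne_top_of_le_ne_top hn hmn
  simp only [elog, if_neg hm, if_neg hn, EReal.coe_le_coe_iff]
  rcases Nat.eq_zero_or_pos m.toNat with h0 | hpos
  · simpa [h0] using Real.log_natCast_nonneg _
  · exact Real.log_le_log (by exact_mod_cast hpos)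
      (by exact_mod_cast ENat.toNat_le_toNat hmn hn)

theorem tendsto_log_const_mul_div_log {c : ℝ} (hc : 0 < c) :
    Tendsto (fun ε => Real.log (c * ε) / Real.log ε) (𝓝[>] 0) (𝓝 1) := by
  have hlog : Tendsto (fun ε => 1 + Real.log c / Real.log ε) (𝓝[>] 0) (𝓝 1) := by
    simpa using (Real.tendsto_log_nhdsGT_zero.const_div_atBot (Real.log c)).const_add 1
  refine hlog.congr' ?_
  filter_upwards [Ioo_mem_nhdsGT one_pos] with ε hε
  have hlogε : Real.log ε ≠ 0 := (Real.log_neg hε.1 hε.2).ne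
  rw [Real.log_mul hc.ne' hε.1.ne', add_div, div_self hlogε, add_comm]

theorem tendsto_const_mul_nhdsGT_zero {c : ℝ} (hc : 0 < c) :
    Tendsto (fun ε => c * ε) (𝓝[>] 0) (𝓝[>] 0) := by
  refine tendsto_nhdsWithin_of_tendsto_nhds_of_eventually_within _ ?_ ?_
  · exact ((continuous_const_mul c).tendsto' 0 0 (mul_zero c)).mono_left nhdsWithin_le_nhds
  · filter_upwards [self_mem_nhdsWithin] with ε (hε : 0 < ε) using mul_pos hc hε

theorem limsup_div_neg_log_le_of_eventually_le {u v : ℝ → EReal} {c : ℝ} (hc : 0 < c)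
    (h : ∀ᶠ ε in 𝓝[>] 0, u ε ≤ v (c * ε)) :
    limsup (fun ε => u ε / ((-Real.log ε : ℝ) : EReal)) (𝓝[>] 0)
      ≤ limsup (fun ε => v ε / ((-Real.log ε : ℝ) : EReal)) (𝓝[>] 0) := by
  refine le_of_forall_gt_imp_ge_of_dense fun a ha => ?_
  obtain ⟨b, hLb, hba⟩ := EReal.exists_between_coe_real ha
  obtain ⟨a', hba', ha'a⟩ := EReal.exists_between_coe_real hba
  have hmul := tendsto_const_mul_nhdsGT_zero hc
  have hv : ∀ᶠ ε in 𝓝[>] 0, v (c * ε) / ((-Real.log (c * ε) : ℝ) : EReal) < b :=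
    hmul.eventually (eventually_lt_of_limsup_lt hLb)
  have hratio : ∀ᶠ ε in 𝓝[>] 0, b * (Real.log (c * ε) / Real.log ε) < a' :=
    ((tendsto_log_const_mul_div_log hc).const_mul b).eventually_lt_const
      (by simpa using EReal.coe_lt_coe_iff.mp hba')
  refine (limsup_le_of_le (by isBoundedDefault) ?_).trans ha'a.le
  filter_upwards [h, hv, hratio, Ioo_mem_nhdsGT one_pos, hmul.eventually (Ioo_mem_nhdsGT one_pos)]
    with ε huv hvb hbr ⟨hε, hε1⟩ ⟨hcε, hcε1⟩
  have hpos : (0 : EReal) < ((-Real.log ε : ℝ) : EReal) := by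
    exact_mod_cast neg_pos.mpr (Real.log_neg hε hε1)
  have hcpos : (0 : EReal) < ((-Real.log (c * ε) : ℝ) : EReal) := by
    exact_mod_cast neg_pos.mpr (Real.log_neg hcε hcε1)
  rw [EReal.div_lt_iff hcpos (EReal.coe_ne_top _)] at hvb
  have hu : u ε / ((-Real.log ε : ℝ) : EReal)
      < ((b * (Real.log (c * ε) / Real.log ε) : ℝ) : EReal) := by
    refine (EReal.div_lt_iff hpos (EReal.coe_ne_top _)).mpr ?_
    calc u ε ≤ v (c * ε) := huv
      _ < b * ((-Real.log (c * ε) : ℝ) : EReal) := hvb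
      _ = ((b * (Real.log (c * ε) / Real.log ε) : ℝ) : EReal) * ((-Real.log ε : ℝ) : EReal) := by
        rw [← EReal.coe_mul, ← EReal.coe_mul]
        congr 1
        field_simp [(Real.log_neg hε hε1).ne]
  exact hu.le.trans (EReal.coe_le_coe_iff.mpr hbr.le)

theorem card_le_coverNum {E : Type*} [SeminormedAddCommGroup E] {X : Set E} {δ : ℝ}
    (S : Finset E) (hSX : ↑S ⊆ X) (hS : ∀ x ∈ S, ∀ y ∈ X, dist x y < δ → y = x) :
    (S.card : ℕ∞) ≤ coverNum X δ := by
  refine le_sInf ?_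
  rintro _ ⟨F, hFX, hXF, rfl⟩
  suffices S ⊆ F from mod_cast Finset.card_le_card this
  intro x hx
  obtain ⟨c, hcF, hxc⟩ := mem_iUnion₂.mp (hXF (hSX hx))
  rwa [← hS x hx c (hFX hcF) hxc]

theorem dualThickNum_le_card {E : Type*} [NormedAddCommGroup E] [NormedSpace ℝ E]
    {X : Set E} {θ ε : ℝ} (S : Finset (E →L[ℝ] ℝ))
    (hS : ∀ x ∈ X, ∀ y ∈ X, ε ≤ ‖x - y‖ → ∃ φ ∈ S, ε ^ (1 + θ) ≤ |φ (x - y)|) :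
    dualThickNum X θ ε ≤ S.card := by
  set U := Submodule.span ℝ (S : Set (E →L[ℝ] ℝ))
  have hU : ∀ x ∈ X, ∀ y ∈ X, ε ≤ ‖x - y‖ → ∃ φ ∈ U, ε ^ (1 + θ) ≤ |φ (x - y)| := by
    intro x hx y hy hxy
    obtain ⟨φ, hφS, hφ⟩ := hS x hx y hy hxy
    exact ⟨φ, Submodule.subset_span hφS, hφ⟩
  calc dualThickNum X θ ε ≤ Module.finrank ℝ U :=
        sInf_le ⟨U, FiniteDimensional.span_finset ℝ S, rfl, hU⟩
    _ ≤ S.card := mod_cast finrank_span_finset_le_card S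

section lpSingle

variable {ι : Type*} [DecidableEq ι] {E : ι → Type*} [∀ i, NormedAddCommGroup (E i)]
  {p : ℝ≥0∞}

theorem lp.single_sub_single_apply_left {i j : ι} (hij : i ≠ j) (a : E i) (b : E j) :
    (lp.single p i a - lp.single p j b) i = a := by
  simp [Pi.single_eq_of_ne hij]

theorem lp.single_sub_single_apply_right {i j : ι} (hij : i ≠ j) (a : E i) (b : E j) :
    (lp.single p i a - lp.single p j b) j = -b := by
  simp [Pi.single_eq_of_ne hij.symm]

theorem lp.norm_single_sub_single_le [Fact (1 ≤ p)] (i j : ι) (a : E i) (b : E j) :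
    ‖lp.single p i a - lp.single p j b‖ ≤ ‖a‖ + ‖b‖ := by
  have hp : 0 < p := zero_lt_one.trans_le Fact.out
  simpa [lp.norm_single hp] using norm_sub_le (lp.single p i a) (lp.single p j b)

theorem lp.norm_le_norm_single_sub_single [Fact (1 ≤ p)] {i j : ι} (hij : i ≠ j) (a : E i)
    (b : E j) : ‖a‖ ≤ ‖lp.single p i a - lp.single p j b‖ := by
  have hp : p ≠ 0 := (zero_lt_one.trans_le Fact.out).ne'
  simpa [lp.single_sub_single_apply_left hij] using
    lp.norm_apply_le_norm hp (lp.single p i a - lp.single p j b) i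

end lpSingle

theorem finite_setOf_le_abs_of_tendsto_zero {α : ℕ → ℝ} (hα : Tendsto α atTop (𝓝 0))
    {δ : ℝ} (hδ : 0 < δ) : {n | δ ≤ |α n|}.Finite := by
  have hα' : Tendsto (fun n => |α n|) atTop (𝓝 0) := by simpa using hα.abs
  have h : ∀ᶠ n in atTop, |α n| < δ := hα'.eventually_lt_const hδ
  rw [← Nat.cofinite_eq_atTop, eventually_cofinite] at h
  simpa only [not_lt] using h

theorem dualThickNum_range_single_le_coverNum {p : ℝ≥0∞} [Fact (1 ≤ p)] {α : ℕ → ℝ}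
    (hα : Tendsto α atTop (𝓝 0)) {θ ε δ : ℝ} (hδ : 0 < δ) (hδε : 2 * δ ≤ ε)
    (hεδ : ε ^ (1 + θ) ≤ δ) :
    dualThickNum (range fun n => (lp.single p n (α n) : lp (fun _ : ℕ => ℝ) p)) θ ε
      ≤ coverNum (range fun n => (lp.single p n (α n) : lp (fun _ : ℕ => ℝ) p)) δ := by
  classical
  set a : ℕ → lp (fun _ : ℕ => ℝ) p := fun n => lp.single p n (α n)
  set S := (finite_setOf_le_abs_of_tendsto_zero hα hδ).toFinset
  have hS : ∀ {n}, n ∈ S ↔ δ ≤ |α n| := Set.Finite.mem_toFinset _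
  have hinj : InjOn a S := by
    intro n hn m _ hnm
    by_contra hne
    have := congrArg (fun f : lp (fun _ : ℕ => ℝ) p => f n) hnm
    simp only [a, lp.single_apply_self, lp.single_apply_ne p m _ hne] at this
    exact hδ.not_ge (by simpa [this] using hS.mp hn)
  calc dualThickNum (range a) θ ε ≤ (S.image (lp.evalCLM ℝ (fun _ : ℕ => ℝ) p)).card :=
        dualThickNum_le_card _ ?separating
    _ ≤ S.card := mod_cast Finset.card_image_le
    _ = (S.image a).card := by rw [Finset.card_image_of_injOn hinj]
    _ ≤ coverNum (range a) δ := card_le_coverNum _ (by simp [a]) ?isolated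
  case separating =>
    rintro _ ⟨n, rfl⟩ _ ⟨m, rfl⟩ hnm
    have hne : n ≠ m := by
      rintro rfl
      simp only [sub_self, norm_zero] at hnm
      linarith
    have hsum := lp.norm_single_sub_single_le (E := fun _ : ℕ => ℝ) (p := p) n m (α n) (α m)
    rw [Real.norm_eq_abs, Real.norm_eq_abs] at hsum
    rcases le_or_gt δ |α n| with hn | hn
    · refine ⟨_, Finset.mem_image_of_mem _ (hS.mpr hn), ?_⟩
      change ε ^ (1 + θ) ≤ |(a n - a m) n|
      rw [lp.single_sub_single_apply_left hne]
      exact hεδ.trans hn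
    · refine ⟨_, Finset.mem_image_of_mem _ (hS.mpr (by linarith : δ ≤ |α m|)), ?_⟩
      change ε ^ (1 + θ) ≤ |(a n - a m) m|
      rw [lp.single_sub_single_apply_right hne, abs_neg]
      linarith
  case isolated =>
    rintro _ hx _ ⟨k, rfl⟩ hdist
    obtain ⟨n, hn, rfl⟩ := Finset.mem_image.mp hx
    by_contra hkn
    have hnk : n ≠ k := fun h => hkn (by rw [h])
    have hsep := lp.norm_le_norm_single_sub_single (E := fun _ : ℕ => ℝ) (p := p) hnk (α n) (α k)
    rw [Real.norm_eq_abs, ← dist_eq_norm] at hsep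
    linarith [hS.mp hn]

theorem eventually_rpow_one_add_le_half_mul {θ : ℝ} (hθ : 0 < θ) :
    ∀ᶠ ε in 𝓝[>] (0 : ℝ), ε ^ (1 + θ) ≤ 2⁻¹ * ε := by
  have h : Tendsto (fun ε : ℝ => ε ^ θ) (𝓝 0) (𝓝 0) := by
    simpa [Real.zero_rpow hθ.ne'] using
      (Real.continuousAt_rpow_const 0 θ (Or.inr hθ.le)).tendsto
  filter_upwards [self_mem_nhdsWithin,
    nhdsWithin_le_nhds (h.eventually_lt_const (inv_pos.mpr two_pos))] with ε (hε : 0 < ε) hεθ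
  rw [Real.rpow_add hε, Real.rpow_one, mul_comm]
  exact mul_le_mul_of_nonneg_right hεθ.le hε.le

theorem dualThickness_orthogonal_seq_le_general (p : ℝ≥0∞) [Fact (1 ≤ p)]
    (α : ℕ → ℝ)
    (hlim : Tendsto α atTop (𝓝 0)) :
    dualThickness (Set.range fun n : ℕ => (lp.single p n (α n) : lp (fun _ : ℕ => ℝ) p))
      ≤ dimBox (Set.range fun n : ℕ => (lp.single p n (α n) : lp (fun _ : ℕ => ℝ) p)) := by
  refine limsup_le_of_le (by isBoundedDefault) ?_
  filter_upwards [self_mem_nhdsWithin] with θ (hθ : 0 < θ)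
  refine limsup_div_neg_log_le_of_eventually_le (inv_pos.mpr two_pos) ?_
  filter_upwards [self_mem_nhdsWithin, eventually_rpow_one_add_le_half_mul hθ]
    with ε (hε : 0 < ε) hεθ
  exact elog_mono (dualThickNum_range_single_le_coverNum hlim (by positivity) (by linarith) hεθ)

/-- for `A = {α_n e_n} ⊂ ℓ_p`, the dual thickness is bounded above by the
box-counting dimension. -/
theorem dualThickness_orthogonal_seq_le (p : ℝ≥0∞) [Fact (1 ≤ p)]
    (α : ℕ → ℝ) (hpos : ∀ n, 0 < α n) (hdec : Antitone α)
    (hlim : Tendsto α atTop (𝓝 0)) :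
    dualThickness (Set.range fun n : ℕ => (lp.single p n (α n) : lp (fun _ : ℕ => ℝ) p))
      ≤ dimBox (Set.range fun n : ℕ => (lp.single p n (α n) : lp (fun _ : ℕ => ℝ) p)) :=
  dualThickness_orthogonal_seq_le_general p α hlim
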